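/- arXiv:1911.09526 — 7 statements merged into one kernel-verified Lean document; each statement's English description precedes it below -/
import Mathlib

section
/- Let a, b ∈ F_{q^2}^* and suppose the polynomials (a^{2q}+b)X^2 + (a^{2q+1} − a^q b^{q+1})X + b^{q+1} and bX^2 − a^q X − a^{q+1} + b^{q+1} are proportional (i.e., their 2×2 minors of coefficients vanish). Then a^q(−a^{q+1}b − a^{2q} + b^{q+2} − b) = 0 and a^{2q}(b^{q+1} − a^{q+1} − b/a^{q-1}) = 0; in particular b^{q+1} − a^{q+1} = b a^{1-q} lies in F_q and b = v/a^2 for some v ∈ F_q^* satisfying v^2 − a^{q+1}v − a^{3q+3} = 0. -/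
/-- If the quadratics `(a^{2q}+b)X^2 + (a^{2q+1} - a^q b^{q+1})X + b^{q+1}` and
`bX^2 - a^q X - a^{q+1} + b^{q+1}` are proportional (their 2×2 coefficient minors
vanish), then `a^q(-a^{q+1}b - a^{2q} + b^{q+2} - b) = 0`,
`a^{2q}(b^{q+1} - a^{q+1} - b/a^{q-1}) = 0`; in particular
`b^{q+1} - a^{q+1} = b·a^{1-q}` lies in `F_q` and `b = v/a^2` for some `v ∈ F_q^*`
with `v^2 - a^{q+1}v - a^{3q+3} = 0`. -/
theorem stmt_6 (p h q : ℕ) (hp : p.Prime) (hh : 1 ≤ h) (hq : q = p ^ h)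
    (F : Type*) [Field F] [Fintype F] [CharP F p]
    (hcard : Fintype.card F = q ^ 2)
    (a b : F) (ha : a ≠ 0) (hb : b ≠ 0)
    (hminor1 : (a ^ (2 * q) + b) * (-(a ^ q)) - (a ^ (2 * q + 1) - a ^ q * b ^ (q + 1)) * b = 0)
    (hminor2 : (a ^ (2 * q) + b) * (-(a ^ (q + 1)) + b ^ (q + 1)) - b ^ (q + 1) * b = 0) :
    a ^ q * (-(a ^ (q + 1)) * b - a ^ (2 * q) + b ^ (q + 2) - b) = 0 ∧
      a ^ (2 * q) * (b ^ (q + 1) - a ^ (q + 1) - b / a ^ (q - 1)) = 0 ∧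
      (b ^ (q + 1) - a ^ (q + 1)) ^ q = b ^ (q + 1) - a ^ (q + 1) ∧
      b ^ (q + 1) - a ^ (q + 1) = b * a / a ^ q ∧
      ∃ v : F, v ^ q = v ∧ v ≠ 0 ∧ b = v / a ^ 2 ∧
        v ^ 2 - a ^ (q + 1) * v - a ^ (3 * q + 3) = 0 := by
  have haq : (a : F) ^ q ≠ 0 := pow_ne_zero _ ha
  have hq1 : 1 ≤ q := by
    subst hq; exact Nat.one_le_iff_ne_zero.mpr (pow_ne_zero _ hp.pos.ne')
  have hAq : a ^ (q - 1) * a = a ^ q := by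
    rw [← pow_succ]; congr 1; omega
  have haq1 : (a : F) ^ (q - 1) ≠ 0 := pow_ne_zero _ ha
  -- x ^ (q*q) = x
  have hcard' : Fintype.card F = q * q := by rw [hcard]; ring
  have hbqq : b ^ (q * q) = b := by rw [← hcard']; exact FiniteField.pow_card b
  have haqq : a ^ (q * q) = a := by rw [← hcard']; exact FiniteField.pow_card a
  -- frobenius is additive
  have frob : ∀ x y : F, (x - y) ^ q = x ^ q - y ^ q := by
    haveI := Fact.mk hp
    intro x y; subst hq; exact sub_pow_char_pow x y h
  -- key from minor2
  have key : a ^ (2 * q) * b ^ (q + 1) - a ^ (3 * q + 1) - a ^ (q + 1) * b = 0 := by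
    linear_combination hminor2
  -- conclusion 1
  have c1 : a ^ q * (-(a ^ (q + 1)) * b - a ^ (2 * q) + b ^ (q + 2) - b) = 0 := by
    linear_combination hminor1
  -- e1' : hminor1 with a^q cancelled
  have e1' : b ^ (q + 2) - a ^ (2 * q) - b - a ^ (q + 1) * b = 0 := by
    apply mul_left_cancel₀ haq
    linear_combination hminor1
  -- conclusion 4
  have c4' : (b ^ (q + 1) - a ^ (q + 1)) * a ^ q = b * a := by
    apply mul_left_cancel₀ haq
    linear_combination key
  have c4 : b ^ (q + 1) - a ^ (q + 1) = b * a / a ^ q := by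
    rw [eq_div_iff haq]; exact c4'
  -- conclusion 2
  have c2 : a ^ (2 * q) * (b ^ (q + 1) - a ^ (q + 1) - b / a ^ (q - 1)) = 0 := by
    have hdiv : b / a ^ (q - 1) = b * a / a ^ q := by
      rw [div_eq_div_iff haq1 haq, ← hAq]; ring
    rw [hdiv, ← c4, sub_self, mul_zero]
  -- conclusion 3
  have c3 : (b ^ (q + 1) - a ^ (q + 1)) ^ q = b ^ (q + 1) - a ^ (q + 1) := by
    rw [frob, ← pow_mul, ← pow_mul]
    have e : (q + 1) * q = q * q + q := by ring
    rw [e, pow_add, pow_add, hbqq, haqq, pow_succ, mul_comm b (b ^ q), mul_comm a (a ^ q)]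
    ring
  refine ⟨c1, c2, c3, c4, b * a ^ 2, ?_, mul_ne_zero hb (pow_ne_zero _ ha), by
      field_simp, ?_⟩
  · -- (b * a^2)^q = b * a^2
    have h5 : (b ^ (q + 1) - a ^ (q + 1)) * a = b ^ q * a ^ q := by
      have := congrArg (· ^ q) c4'
      simp only [mul_pow] at this
      rw [c3, ← pow_mul, haqq] at this
      exact this
    have : b ^ q * a ^ q * a ^ q = b * a * a := by
      rw [← h5, mul_assoc, mul_comm a (a ^ q), ← mul_assoc, c4']
    calc (b * a ^ 2) ^ q = b ^ q * a ^ q * a ^ q := by rw [mul_pow, ← pow_mul]; ring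
      _ = b * a * a := this
      _ = b * a ^ 2 := by ring
  · -- quadratic for v = b * a^2
    have hW : a ^ q * (b ^ 2 * a - a ^ q * b - a ^ (3 * q)) = 0 := by
      linear_combination a ^ (2 * q) * e1' - b * key
    have W : b ^ 2 * a - a ^ q * b - a ^ (3 * q) = 0 := by
      rcases mul_eq_zero.mp hW with h | h
      · exact absurd h haq
      · exact h
    linear_combination a ^ 3 * W
end

section
/- Let p > 3, a, b ∈ F_{q^2}^* with b = v/a^2 for v ∈ F_q^* satisfying v^2 − a^{q+1}v − a^{3q+3} = 0. Let η ∈ F_{q^2} with η^2 = −3a^{2q+2} − 4v, set δ = η/a and Z = (a^q + δ)/(2b). If η ∉ F_q (equivalently η^q = −η and η ≠ 0), then Z^{q+1} = 1, i.e., Z ∈ μ_{q+1}. -/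
/-!
The map `x ↦ x^q` is the nontrivial automorphism of `F_{q^2}` over `F_q`, so `Z^{q+1}` is the
product of `Z` and its conjugate `(a - η/a^q)/(2b^q)`. Writing `N = a^{q+1}`, the product of the
numerators is `N - η²/N = 4(N² + v)/N`, and the cubic relation `v² = Nv + N³` makes this equal to
the product `4v²/N²` of the denominators.
-/

theorem conj_div_mul_div_eq_one {K : Type*} [Field K] (h2 : (2 : K) ≠ 0) {a a' v η : K}
    (ha : a ≠ 0) (ha' : a' ≠ 0)
    (hrel : v ^ 2 - a' * a * v - (a' * a) ^ 3 = 0)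
    (hη : η ^ 2 = -3 * (a' * a) ^ 2 - 4 * v) :
    (a + -η / a') / (2 * (v / a' ^ 2)) * ((a' + η / a) / (2 * (v / a ^ 2))) = 1 := by
  have hv : v ≠ 0 := by
    rintro rfl
    exact pow_ne_zero 3 (mul_ne_zero ha' ha) (by linear_combination -hrel)
  field_simp
  linear_combination -4 * hrel - a' * a * hη

theorem CharP.two_ne_zero_of_two_lt {R : Type*} [AddMonoidWithOne R] (p : ℕ) [CharP R p]
    (hp : 2 < p) : (2 : R) ≠ 0 := by
  intro h2
  have := Nat.le_of_dvd two_pos ((CharP.cast_eq_zero_iff R p 2).mp (mod_cast h2))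
  omega

theorem stmt_7_general (p h q : ℕ) (hp : p.Prime) (hp3 : 3 < p) (hq : q = p ^ h)
    (F : Type*) [Field F] [Fintype F] [CharP F p]
    (hcard : Fintype.card F = q ^ 2)
    (a v b η : F) (ha : a ≠ 0) (hv : v ^ q = v)
    (hb : b = v / a ^ 2)
    (hrel : v ^ 2 - a ^ (q + 1) * v - a ^ (3 * q + 3) = 0)
    (hη2 : η ^ 2 = -3 * a ^ (2 * q + 2) - 4 * v)
    (hηq : η ^ q = -η) :
    ((a ^ q + η / a) / (2 * b)) ^ (q + 1) = 1 := by
  have := Fact.mk hp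
  subst hb hq
  set σ := iterateFrobenius F p h
  have hσ (x : F) : σ x = x ^ p ^ h := iterateFrobenius_def p h x
  have hσa : σ a ^ p ^ h = a := by
    rw [hσ, ← pow_mul, ← sq, ← hcard, FiniteField.pow_card]
  rw [pow_succ, ← hσ]
  simp only [map_div₀, map_add, map_mul, map_ofNat, map_pow, hσa]
  rw [hσ η, hηq, hσ v, hv, hσ a]
  exact conj_div_mul_div_eq_one (a' := a ^ p ^ h) (CharP.two_ne_zero_of_two_lt p (by omega)) ha
    (pow_ne_zero _ ha) (by linear_combination hrel) (by linear_combination hη2)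

/-- With `b = v/a^2`, `v^2 - a^{q+1}v - a^{3q+3} = 0`, `η^2 = -3a^{2q+2} - 4v`,
`η ∉ F_q` (i.e. `η^q = -η`, `η ≠ 0`), the root `Z = (a^q + η/a)/(2b)` of
`bX^2 - a^qX - a^{q+1} + b^{q+1}` lies in `μ_{q+1}`. -/
theorem stmt_7 (p h q : ℕ) (hp : p.Prime) (hp3 : 3 < p) (hh : 1 ≤ h) (hq : q = p ^ h)
    (F : Type*) [Field F] [Fintype F] [CharP F p]
    (hcard : Fintype.card F = q ^ 2)
    (a v b η : F) (ha : a ≠ 0) (hv : v ^ q = v) (hv0 : v ≠ 0)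
    (hb : b = v / a ^ 2)
    (hrel : v ^ 2 - a ^ (q + 1) * v - a ^ (3 * q + 3) = 0)
    (hη2 : η ^ 2 = -3 * a ^ (2 * q + 2) - 4 * v)
    (hηq : η ^ q = -η) (hη0 : η ≠ 0) :
    ((a ^ q + η / a) / (2 * b)) ^ (q + 1) = 1 :=
  stmt_7_general p h q hp hp3 hq F hcard a v b η ha hv hb hrel hη2 hηq
end

section
/- Let a ∈ F_{q^2}^*, v ∈ F_q^*, b = v/a^2. The resultant with respect to x of N(x) = a^q x^3 + x^2 + b^q and D(x) = b x^3 + x + a equals, up to a nonzero factor, (a^{3q+3} + a^{q+1}v − v^2)^2 (a^{3q+3} − a^{2q+2} − 2a^{q+1}v − v^2). In particular, if a^{3q+3} + a^{q+1}v − v^2 = 0, then N and D have a common root in an algebraic closure. -/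
/-!
Since `v ∈ F_q`, `b^q = v / a^{2q}`, so with `s = a^q` the Sylvester determinant is a rational
function of `s`, `a`, `v`; expanding it and clearing the denominator `(s a)^6` gives the stated
factorisation.

If `(s a)^3 + s a v = v^2`, then `v · s²N - s³ · a²D = s · (v s x² - s² a² x + v a)`, and a root
of this quadratic is a common root of `N` and `D`: it exists in any algebraically closed field.
-/

open Polynomial

theorem det_sylvester_cubics {R : Type*} [CommRing R] (s w u a : R) :
    Matrix.det !![s, 1, 0, w, 0, 0;
                  0, s, 1, 0, w, 0;
                  0, 0, s, 1, 0, w;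
                  u, 0, 1, a, 0, 0;
                  0, u, 0, 1, a, 0;
                  0, 0, u, 0, 1, a] =
      a ^ 3 * s ^ 3 - a ^ 2 * s ^ 2 - a ^ 2 * u - s ^ 2 * w - a * s * u * w - u * w
        + 3 * a * s * u ^ 2 * w ^ 2 - 3 * a ^ 2 * s ^ 2 * u * w + 2 * u ^ 2 * w ^ 2
        - u ^ 3 * w ^ 3 := by
  simp [Matrix.det_succ_row_zero, Fin.sum_univ_succ, Fin.succAbove]
  ring

theorem det_sylvester_cubics_mul_pow_six {K : Type*} [Field K] {s a : K} (hs : s ≠ 0)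
    (ha : a ≠ 0) (v : K) :
    Matrix.det !![s, 1, 0, v / s ^ 2, 0, 0;
                  0, s, 1, 0, v / s ^ 2, 0;
                  0, 0, s, 1, 0, v / s ^ 2;
                  v / a ^ 2, 0, 1, a, 0, 0;
                  0, v / a ^ 2, 0, 1, a, 0;
                  0, 0, v / a ^ 2, 0, 1, a] * (s * a) ^ 6 =
      ((s * a) ^ 3 + s * a * v - v ^ 2) ^ 2 *
        ((s * a) ^ 3 - (s * a) ^ 2 - 2 * (s * a) * v - v ^ 2) := by
  rw [det_sylvester_cubics]
  field_simp
  ring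

theorem cubics_eq_zero_of_quadratic_eq_zero {K : Type*} [Field K] {s a v x : K} (hs : s ≠ 0)
    (hv : v ≠ 0) (hsav : (s * a) ^ 3 + s * a * v - v ^ 2 = 0)
    (hx : v * s * x ^ 2 - s ^ 2 * a ^ 2 * x + v * a = 0) :
    s ^ 3 * x ^ 3 + s ^ 2 * x ^ 2 + v = 0 ∧ v * x ^ 3 + a ^ 2 * x + a ^ 3 = 0 := by
  have hD : v * x ^ 3 + a ^ 2 * x + a ^ 3 = 0 := by
    refine (mul_eq_zero.mp ?_).resolve_left (mul_ne_zero hv hs)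
    linear_combination (v * x + s * a ^ 2) * hx + a * x * hsav
  refine ⟨(mul_eq_zero.mp ?_).resolve_left hv, hD⟩
  linear_combination s ^ 3 * hD + s * hx - hsav

theorem exists_common_root_cubics {K : Type*} [Field K] [IsAlgClosed K] {s a : K} (hs : s ≠ 0)
    (ha : a ≠ 0) {v : K} (hsav : (s * a) ^ 3 + s * a * v - v ^ 2 = 0) :
    ∃ x : K, s * x ^ 3 + x ^ 2 + v / s ^ 2 = 0 ∧ v / a ^ 2 * x ^ 3 + x + a = 0 := by
  have hv : v ≠ 0 := by
    rintro rfl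
    exact pow_ne_zero 3 (mul_ne_zero hs ha) (by simpa using hsav)
  obtain ⟨x, hx⟩ :=
    IsAlgClosed.exists_root (C (v * s) * X ^ 2 + C (-(s ^ 2 * a ^ 2)) * X + C (v * a)) (by
      rw [degree_quadratic (mul_ne_zero hv hs)]; exact two_ne_zero)
  have hQ : v * s * x ^ 2 - s ^ 2 * a ^ 2 * x + v * a = 0 := by
    simpa [sub_eq_add_neg] using hx
  obtain ⟨hN, hD⟩ := cubics_eq_zero_of_quadratic_eq_zero hs hv hsav hQ
  refine ⟨x, ?_, ?_⟩
  · field_simp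
    linear_combination hN
  · field_simp
    linear_combination hD

theorem stmt_11_general (q : ℕ)
    (F : Type*) [Field F]
    (a v b : F) (ha : a ≠ 0) (hv : v ^ q = v)
    (hb : b = v / a ^ 2)
    (i : F →+* AlgebraicClosure F) :
    (∃ c : F, c ≠ 0 ∧
      Matrix.det !![a ^ q, 1, 0, b ^ q, 0, 0;
                    0, a ^ q, 1, 0, b ^ q, 0;
                    0, 0, a ^ q, 1, 0, b ^ q;
                    b, 0, 1, a, 0, 0;
                    0, b, 0, 1, a, 0;
                    0, 0, b, 0, 1, a] =
        c * ((a ^ (3 * q + 3) + a ^ (q + 1) * v - v ^ 2) ^ 2 *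
          (a ^ (3 * q + 3) - a ^ (2 * q + 2) - 2 * a ^ (q + 1) * v - v ^ 2))) ∧
    (a ^ (3 * q + 3) + a ^ (q + 1) * v - v ^ 2 = 0 →
      ∃ x : AlgebraicClosure F,
        i a ^ q * x ^ 3 + x ^ 2 + i b ^ q = 0 ∧ i b * x ^ 3 + x + i a = 0) := by
  have hs : a ^ q ≠ 0 := pow_ne_zero q ha
  have hbq : b ^ q = v / (a ^ q) ^ 2 := by
    rw [hb, div_pow, hv, ← pow_mul, ← pow_mul, mul_comm]
  refine ⟨⟨((a ^ q * a) ^ 6)⁻¹, by simp [ha], ?_⟩, fun hcond ↦ ?_⟩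
  · rw [hbq, hb, eq_inv_mul_iff_mul_eq₀ (pow_ne_zero 6 (mul_ne_zero hs ha))]
    linear_combination det_sylvester_cubics_mul_pow_six hs ha v
  · have hsav : (a ^ q * a) ^ 3 + a ^ q * a * v - v ^ 2 = 0 := by linear_combination hcond
    have hia : i a ≠ 0 := (map_ne_zero i).mpr ha
    obtain ⟨x, hN, hD⟩ :=
      exists_common_root_cubics (pow_ne_zero q hia) hia (by simpa using congrArg i hsav)
    refine ⟨x, ?_, ?_⟩
    · rwa [← map_pow i b, hbq, map_div₀, map_pow, map_pow]
    · rwa [hb, map_div₀, map_pow]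

/-- With `b = v/a^2`, `v ∈ F_q^*`, the resultant (Sylvester determinant) of
`N(x) = a^q x^3 + x^2 + b^q` and `D(x) = b x^3 + x + a` equals, up to a nonzero
factor, `(a^{3q+3} + a^{q+1}v - v^2)^2 (a^{3q+3} - a^{2q+2} - 2a^{q+1}v - v^2)`;
in particular if `a^{3q+3} + a^{q+1}v - v^2 = 0` then `N` and `D` have a common
root in an algebraic closure. -/
theorem stmt_11 (p h q : ℕ) (hp : p.Prime) (hh : 1 ≤ h) (hq : q = p ^ h)
    (F : Type*) [Field F] [Fintype F] [CharP F p]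
    (hcard : Fintype.card F = q ^ 2)
    (a v b : F) (ha : a ≠ 0) (hv : v ^ q = v) (hv0 : v ≠ 0)
    (hb : b = v / a ^ 2)
    (i : F →+* AlgebraicClosure F) (hi : i = algebraMap F (AlgebraicClosure F)) :
    (∃ c : F, c ≠ 0 ∧
      Matrix.det !![a ^ q, 1, 0, b ^ q, 0, 0;
                    0, a ^ q, 1, 0, b ^ q, 0;
                    0, 0, a ^ q, 1, 0, b ^ q;
                    b, 0, 1, a, 0, 0;
                    0, b, 0, 1, a, 0;
                    0, 0, b, 0, 1, a] =
        c * ((a ^ (3 * q + 3) + a ^ (q + 1) * v - v ^ 2) ^ 2 *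
          (a ^ (3 * q + 3) - a ^ (2 * q + 2) - 2 * a ^ (q + 1) * v - v ^ 2))) ∧
    (a ^ (3 * q + 3) + a ^ (q + 1) * v - v ^ 2 = 0 →
      ∃ x : AlgebraicClosure F,
        i a ^ q * x ^ 3 + x ^ 2 + i b ^ q = 0 ∧ i b * x ^ 3 + x + i a = 0) :=
  stmt_11_general q F a v b ha hv hb i
end

section
/- If F_{a,b}(X,Y) factors as −b(X^2+AX+BY+C)(Y^2+AY+BX+C) for A, B, C in an algebraic closure, then comparing coefficients forces Bb = 0, hence B = 0 (as b ≠ 0), and then F_{a,b}(X,Y) = −b(X^2+AX+C)(Y^2+AY+C) splits into four linear factors over the algebraic closure. -/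
/-- If `F_{a,b}(X,Y)` factors as `-b(X^2+AX+BY+C)(Y^2+AY+BX+C)` over an algebraic
closure, then `bB = 0`, hence `B = 0`, and `F_{a,b}(X,Y)` splits into four linear
factors over the algebraic closure. -/
theorem stmt_12 (p h q : ℕ) (hp : p.Prime) (hh : 1 ≤ h) (hq : q = p ^ h)
    (F : Type*) [Field F] [Fintype F] [CharP F p]
    (hcard : Fintype.card F = q ^ 2)
    (a b : F) (ha : a ≠ 0) (hb : b ≠ 0)
    (A B C : AlgebraicClosure F)
    (i : F →+* AlgebraicClosure F) (hi : i = algebraMap F (AlgebraicClosure F))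
    (hfact : ∀ X Y : AlgebraicClosure F,
      (i a ^ q * X ^ 3 + X ^ 2 + i b ^ q) * (i b * Y ^ 3 + Y + i a) -
          (i a ^ q * Y ^ 3 + Y ^ 2 + i b ^ q) * (i b * X ^ 3 + X + i a) =
        (X - Y) * (-(i b) * (X ^ 2 + A * X + B * Y + C) * (Y ^ 2 + A * Y + B * X + C))) :
    i b * B = 0 ∧ B = 0 ∧
      ∃ r s : AlgebraicClosure F, ∀ X Y : AlgebraicClosure F,
        (i a ^ q * X ^ 3 + X ^ 2 + i b ^ q) * (i b * Y ^ 3 + Y + i a) -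
            (i a ^ q * Y ^ 3 + Y ^ 2 + i b ^ q) * (i b * X ^ 3 + X + i a) =
          (X - Y) * (-(i b) * (X - r) * (X - s) * (Y - r) * (Y - s)) := by
  have hbi : i b ≠ 0 := by
    rw [hi]
    simpa using hb
  -- Step 1: b * B = 0, by extracting the degree-4 coefficient of the identity at Y = 0.
  have key : ∀ x : AlgebraicClosure F,
      (-(i b * B)) * x ^ 4
        + (-(i b * (C + A * B)) - i a ^ q * i a + i b ^ q * i b) * x ^ 3
        + (-(i b * (A * C + B * C)) - i a) * x ^ 2
        + (-(i b * C ^ 2) + i b ^ q) * x = 0 := by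
    intro x
    linear_combination -(hfact x 0)
  have hP : (Polynomial.C (-(i b * B)) * Polynomial.X ^ 4
      + Polynomial.C (-(i b * (C + A * B)) - i a ^ q * i a + i b ^ q * i b) * Polynomial.X ^ 3
      + Polynomial.C (-(i b * (A * C + B * C)) - i a) * Polynomial.X ^ 2
      + Polynomial.C (-(i b * C ^ 2) + i b ^ q) * Polynomial.X
        : Polynomial (AlgebraicClosure F)) = 0 := by
    apply Polynomial.funext
    intro x
    simp only [Polynomial.eval_add, Polynomial.eval_mul, Polynomial.eval_pow,
      Polynomial.eval_C, Polynomial.eval_X, Polynomial.eval_zero]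
    exact key x
  have hbB : i b * B = 0 := by
    have h4 : (-(i b * B)) = (0 : Polynomial (AlgebraicClosure F)).coeff 4 := by
      rw [← hP]
      simp only [Polynomial.coeff_add, Polynomial.coeff_C_mul, Polynomial.coeff_X_pow,
        Polynomial.coeff_X, Polynomial.coeff_ofNat_succ]
      norm_num
    rw [Polynomial.coeff_zero] at h4
    exact neg_eq_zero.mp h4
  have hB : B = 0 := by
    rcases mul_eq_zero.mp hbB with h1 | h1
    · exact absurd h1 hbi
    · exact h1
  refine ⟨hbB, hB, ?_⟩
  -- Step 2: find roots of X^2 + A X + C over the algebraic closure.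
  obtain ⟨r, hr⟩ := IsAlgClosed.exists_root
    (Polynomial.X ^ 2 + Polynomial.C A * Polynomial.X + Polynomial.C C
      : Polynomial (AlgebraicClosure F)) (by
        have : (Polynomial.X ^ 2 + Polynomial.C A * Polynomial.X + Polynomial.C C
            : Polynomial (AlgebraicClosure F)).degree = 2 := by
          compute_degree!
        rw [this]; norm_num)
  have hr' : r ^ 2 + A * r + C = 0 := by
    have := hr
    simp only [Polynomial.IsRoot, Polynomial.eval_add, Polynomial.eval_mul,
      Polynomial.eval_pow, Polynomial.eval_C, Polynomial.eval_X] at this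
    exact this
  simp only [hB, zero_mul, add_zero] at hfact
  refine ⟨r, -A - r, fun X Y => ?_⟩
  have hqX : X ^ 2 + A * X + C = (X - r) * (X - (-A - r)) := by linear_combination hr'
  have hqY : Y ^ 2 + A * Y + C = (Y - r) * (Y - (-A - r)) := by linear_combination hr'
  linear_combination (hfact X Y)
    + ((X - Y) * (-(i b)) * (Y ^ 2 + A * Y + C)) * hqX
    + ((X - Y) * (-(i b)) * ((X - r) * (X - (-A - r)))) * hqY
end

section
/- The resultant with respect to x of N(x) = a^q x^3 + x^2 + b^q and D(x) = b x^3 + x + a equals (up to a power of b and a unit) a^{3q+3} − 3a^{2q+2}b^{q+1} − a^{2q+2} − a^2 b + 3a^{q+1}b^{2q+2} − a^{q+1}b^{q+1} − a^{2q}b^q − b^{3q+3} + 2b^{2q+2} − b^{q+1}. Hence if this expression vanishes, N and D share a common root in an algebraic closure. -/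
/-!
The given determinant and Mathlib's Sylvester matrix of `N = A X³ + X² + B` and
`D = b X³ + X + a` (taken in formal degrees 3, 3) expand to the same polynomial in `A, B, a, b`.
Over an algebraically closed field a vanishing resultant means `N` and `D` are not coprime,
hence share a root; the formal degree of `N` may exceed its true degree, which only multiplies
the resultant by a power of the leading coefficient `b ≠ 0` of `D`.
-/

open Polynomial

section

variable {R : Type*} [CommRing R]

/-- `Res(A X³ + X² + B, b X³ + X + a)`; the theorem's expression is its value at
`A = a ^ q`, `B = b ^ q`. -/
def cubicPairResultant (A B a b : R) : R :=
  A ^ 3 * a ^ 3 - 3 * A ^ 2 * a ^ 2 * B * b - A ^ 2 * a ^ 2 - a ^ 2 * b + 3 * A * a * B ^ 2 * b ^ 2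
    - A * a * B * b - A ^ 2 * B - B ^ 3 * b ^ 3 + 2 * B ^ 2 * b ^ 2 - B * b

theorem det_cubicPair_matrix (A B a b : R) :
    Matrix.det !![A, 1, 0, B, 0, 0;
                  0, A, 1, 0, B, 0;
                  0, 0, A, 1, 0, B;
                  b, 0, 1, a, 0, 0;
                  0, b, 0, 1, a, 0;
                  0, 0, b, 0, 1, a] = cubicPairResultant A B a b := by
  simp [Matrix.det_succ_row_zero, Fin.sum_univ_succ, Fin.succAbove, cubicPairResultant]
  ring

theorem sylvester_cubicPair (A B a b : R) :
    sylvester (C A * X ^ 3 + X ^ 2 + C B) (C b * X ^ 3 + X + C a) 3 3 =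
      !![a, 0, 0, B, 0, 0;
         1, a, 0, 0, B, 0;
         0, 1, a, 1, 0, B;
         b, 0, 1, A, 1, 0;
         0, b, 0, 0, A, 1;
         0, 0, b, 0, 0, A] := by
  ext i j
  fin_cases i <;> fin_cases j <;> simp [sylvester, coeff_X, coeff_C, Fin.addCases]

theorem resultant_cubicPair (A B a b : R) :
    resultant (C A * X ^ 3 + X ^ 2 + C B) (C b * X ^ 3 + X + C a) 3 3 =
      cubicPairResultant A B a b := by
  rw [resultant, sylvester_cubicPair]
  simp [Matrix.det_succ_row_zero, Fin.sum_univ_succ, Fin.succAbove, cubicPairResultant]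
  ring

theorem map_cubicPairResultant {S : Type*} [CommRing S] (φ : R →+* S) (A B a b : R) :
    φ (cubicPairResultant A B a b) = cubicPairResultant (φ A) (φ B) (φ a) (φ b) := by
  simp [cubicPairResultant, map_ofNat]

end

theorem exists_isRoot_isRoot_of_resultant_eq_zero {K : Type*} [Field K] [IsAlgClosed K]
    {f g : K[X]} (h : resultant f g = 0) : ∃ x, f.IsRoot x ∧ g.IsRoot x := by
  have hcop := (resultant_eq_zero_iff.1 h).2
  rw [isCoprime_iff_aeval_ne_zero_of_isAlgClosed (k := K) K] at hcop
  push Not at hcop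
  simpa using hcop

theorem exists_isRoot_isRoot_of_resultant_eq_zero_of_natDegree_le {K : Type*} [Field K]
    [IsAlgClosed K] {f g : K[X]} {m : ℕ} (hm : f.natDegree ≤ m) (hg : g ≠ 0)
    (h : resultant f g m g.natDegree = 0) : ∃ x, f.IsRoot x ∧ g.IsRoot x := by
  obtain ⟨k, rfl⟩ := Nat.exists_eq_add_of_le hm
  rw [resultant_add_left_deg _ _ _ _ _ le_rfl, coeff_natDegree] at h
  exact exists_isRoot_isRoot_of_resultant_eq_zero ((mul_eq_zero.1 h).resolve_left (by simp [hg]))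

theorem stmt_13_general (q : ℕ)
    (F : Type*) [Field F]
    (a b : F) (hb : b ≠ 0)
    (i : F →+* AlgebraicClosure F) :
    (∃ (k : ℕ) (u : F), IsUnit u ∧
      Matrix.det !![a ^ q, 1, 0, b ^ q, 0, 0;
                    0, a ^ q, 1, 0, b ^ q, 0;
                    0, 0, a ^ q, 1, 0, b ^ q;
                    b, 0, 1, a, 0, 0;
                    0, b, 0, 1, a, 0;
                    0, 0, b, 0, 1, a] =
        u * b ^ k *
          (a ^ (3 * q + 3) - 3 * a ^ (2 * q + 2) * b ^ (q + 1) - a ^ (2 * q + 2) -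
            a ^ 2 * b + 3 * a ^ (q + 1) * b ^ (2 * q + 2) - a ^ (q + 1) * b ^ (q + 1) -
            a ^ (2 * q) * b ^ q - b ^ (3 * q + 3) + 2 * b ^ (2 * q + 2) - b ^ (q + 1))) ∧
    (a ^ (3 * q + 3) - 3 * a ^ (2 * q + 2) * b ^ (q + 1) - a ^ (2 * q + 2) -
        a ^ 2 * b + 3 * a ^ (q + 1) * b ^ (2 * q + 2) - a ^ (q + 1) * b ^ (q + 1) -
        a ^ (2 * q) * b ^ q - b ^ (3 * q + 3) + 2 * b ^ (2 * q + 2) - b ^ (q + 1) = 0 →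
      ∃ x : AlgebraicClosure F,
        i a ^ q * x ^ 3 + x ^ 2 + i b ^ q = 0 ∧ i b * x ^ 3 + x + i a = 0) := by
  have hE : cubicPairResultant (a ^ q) (b ^ q) a b =
      a ^ (3 * q + 3) - 3 * a ^ (2 * q + 2) * b ^ (q + 1) - a ^ (2 * q + 2) -
        a ^ 2 * b + 3 * a ^ (q + 1) * b ^ (2 * q + 2) - a ^ (q + 1) * b ^ (q + 1) -
        a ^ (2 * q) * b ^ q - b ^ (3 * q + 3) + 2 * b ^ (2 * q + 2) - b ^ (q + 1) := by
    simp only [cubicPairResultant]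
    ring
  refine ⟨⟨0, 1, isUnit_one, ?_⟩, fun hzero => ?_⟩
  · rw [det_cubicPair_matrix, hE, pow_zero, one_mul, one_mul]
  set N : (AlgebraicClosure F)[X] := C (i a ^ q) * X ^ 3 + X ^ 2 + C (i b ^ q)
  set D : (AlgebraicClosure F)[X] := C (i b) * X ^ 3 + X + C (i a)
  have hN : N.natDegree ≤ 3 := by simp only [N]; compute_degree
  have hD : D.natDegree = 3 := by simp only [D]; compute_degree!
  have hres : resultant N D 3 D.natDegree = 0 := by
    rw [hD, resultant_cubicPair, ← map_pow, ← map_pow, ← map_cubicPairResultant, hE, hzero, map_zero]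
  obtain ⟨x, hNx, hDx⟩ := exists_isRoot_isRoot_of_resultant_eq_zero_of_natDegree_le hN
    (ne_zero_of_natDegree_gt (n := 0) (by rw [hD]; norm_num)) hres
  exact ⟨x, by simpa [N] using hNx, by simpa [D] using hDx⟩

/-- The resultant (Sylvester determinant) of `N(x) = a^q x^3 + x^2 + b^q` and
`D(x) = b x^3 + x + a` equals, up to a power of `b` and a unit,
`a^{3q+3} - 3a^{2q+2}b^{q+1} - a^{2q+2} - a^2 b + 3a^{q+1}b^{2q+2} - a^{q+1}b^{q+1}
 - a^{2q}b^q - b^{3q+3} + 2b^{2q+2} - b^{q+1}`; hence if this expression vanishes,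
`N` and `D` share a root in an algebraic closure. -/
theorem stmt_13 (p h q : ℕ) (hp : p.Prime) (hh : 1 ≤ h) (hq : q = p ^ h)
    (F : Type*) [Field F] [Fintype F] [CharP F p]
    (hcard : Fintype.card F = q ^ 2)
    (a b : F) (ha : a ≠ 0) (hb : b ≠ 0)
    (i : F →+* AlgebraicClosure F) (hi : i = algebraMap F (AlgebraicClosure F)) :
    (∃ (k : ℕ) (u : F), IsUnit u ∧
      Matrix.det !![a ^ q, 1, 0, b ^ q, 0, 0;
                    0, a ^ q, 1, 0, b ^ q, 0;
                    0, 0, a ^ q, 1, 0, b ^ q;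
                    b, 0, 1, a, 0, 0;
                    0, b, 0, 1, a, 0;
                    0, 0, b, 0, 1, a] =
        u * b ^ k *
          (a ^ (3 * q + 3) - 3 * a ^ (2 * q + 2) * b ^ (q + 1) - a ^ (2 * q + 2) -
            a ^ 2 * b + 3 * a ^ (q + 1) * b ^ (2 * q + 2) - a ^ (q + 1) * b ^ (q + 1) -
            a ^ (2 * q) * b ^ q - b ^ (3 * q + 3) + 2 * b ^ (2 * q + 2) - b ^ (q + 1))) ∧
    (a ^ (3 * q + 3) - 3 * a ^ (2 * q + 2) * b ^ (q + 1) - a ^ (2 * q + 2) -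
        a ^ 2 * b + 3 * a ^ (q + 1) * b ^ (2 * q + 2) - a ^ (q + 1) * b ^ (q + 1) -
        a ^ (2 * q) * b ^ q - b ^ (3 * q + 3) + 2 * b ^ (2 * q + 2) - b ^ (q + 1) = 0 →
      ∃ x : AlgebraicClosure F,
        i a ^ q * x ^ 3 + x ^ 2 + i b ^ q = 0 ∧ i b * x ^ 3 + x + i a = 0) :=
  stmt_13_general q F a b hb i
end

section
/- Let p > 3, a ∈ F_{q^2}^* with a ≠ −2/3 and 3a^{q+1} + a + a^q = 0. Then w := −3((3a+2)/(3a))^2 lies in F_q and w^{(q-1)/2} = (−3)^{(q-1)/2} · ((3a+2)/(3a))^{q-1}; in particular, if −3 is a non-square in F_q, then w is a nonzero square in F_q. -/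
/-!
With `σ x = x ^ q` the Frobenius of `F_{q^2}/F_q`, the relation `3 a σ(a) + a + σ(a) = 0` is
exactly what makes `b = (3a+2)/(3a)` satisfy `σ b = -b`. Hence `w = -3 b²` is `σ`-fixed and
`w^((q-1)/2) = (-3)^((q-1)/2) b^(q-1)`. Every element of `F_q` is a square in `F_{q^2}`; a square
root `c` of `-3` then has `σ c = ± c`, and if `-3` is not a square in `F_q` the sign is `-`, so
`c b` is a square root of `w` lying in `F_q`.
-/

lemma RingHom.map_div_three_mul_eq_neg {F : Type*} [Field F] (σ : F →+* F) {a : F}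
    (h3 : (3 : F) ≠ 0) (ha : a ≠ 0) (hrel : 3 * a * σ a + a + σ a = 0) :
    σ ((3 * a + 2) / (3 * a)) = -((3 * a + 2) / (3 * a)) := by
  have hσa : σ a ≠ 0 := (map_ne_zero σ).mpr ha
  simp only [map_div₀, map_add, map_mul, map_ofNat]
  field_simp
  linear_combination 2 * hrel

lemma FiniteField.isSquare_of_pow_eq_self {F : Type*} [Field F] [Fintype F] {q : ℕ}
    (hq : Odd q) (hcard : Fintype.card F = q ^ 2) {x : F} (hx : x ^ q = x) : IsSquare x := by
  rcases eq_or_ne x 0 with rfl | hx0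
  · exact IsSquare.zero
  have hchar : ringChar F ≠ 2 := by
    have := Nat.odd_iff.mp (hq.pow : Odd (q ^ 2))
    rw [Ne, FiniteField.even_card_iff_char_two, hcard]
    omega
  have hx1 : x ^ (q - 1) = 1 := by
    have hq1 : q - 1 + 1 = q := Nat.sub_add_cancel hq.pos
    rw [← mul_left_inj' hx0, ← pow_succ, hq1, hx, one_mul]
  obtain ⟨k, rfl⟩ := hq
  have hexp : (2 * k + 1) ^ 2 / 2 = (2 * k + 1 - 1) * (k + 1) := by
    rw [show (2 * k + 1) ^ 2 = 2 * (2 * k * (k + 1)) + 1 by ring, Nat.mul_add_div two_pos,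
      Nat.add_sub_cancel]
    simp
  rw [FiniteField.isSquare_iff hchar hx0, hcard, hexp, pow_mul, hx1, one_pow]

lemma RingHom.exists_fixed_sq_eq_mul_sq {F : Type*} [Field F] (σ : F →+* F) {b d : F}
    (hb : σ b = -b) (hb0 : b ≠ 0) (hd : IsSquare d) (hσd : σ d = d)
    (hns : ¬∃ u, σ u = u ∧ u ^ 2 = d) : ∃ u, σ u = u ∧ u ≠ 0 ∧ d * b ^ 2 = u ^ 2 := by
  obtain ⟨c, rfl⟩ := hd
  have hσc : σ c = -c := by
    have : (σ c - c) * (σ c + c) = 0 := by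
      linear_combination (by simpa using hσd : σ c * σ c = c * c)
    refine eq_neg_of_add_eq_zero_left <| (mul_eq_zero.mp this).resolve_left fun h => ?_
    exact hns ⟨c, sub_eq_zero.mp h, sq c⟩
  have hc0 : c ≠ 0 := by
    rintro rfl
    exact hns ⟨0, map_zero σ, by ring⟩
  exact ⟨c * b, by rw [map_mul, hσc, hb, neg_mul_neg], mul_ne_zero hc0 hb0, by ring⟩

theorem stmt_16_general (p h q : ℕ) (hp : p.Prime) (hp3 : 3 < p) (hq : q = p ^ h)
    (F : Type*) [Field F] [Fintype F] [CharP F p]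
    (hcard : Fintype.card F = q ^ 2)
    (a : F) (ha : a ≠ 0) (ha2 : a ≠ -2 / 3)
    (hrel : 3 * a ^ (q + 1) + a + a ^ q = 0) :
    (-3 * ((3 * a + 2) / (3 * a)) ^ 2) ^ q = -3 * ((3 * a + 2) / (3 * a)) ^ 2 ∧
      (-3 * ((3 * a + 2) / (3 * a)) ^ 2) ^ ((q - 1) / 2) =
        (-3 : F) ^ ((q - 1) / 2) * ((3 * a + 2) / (3 * a)) ^ (q - 1) ∧
      ((¬∃ u : F, u ^ q = u ∧ u ^ 2 = (-3 : F)) →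
        ∃ u : F, u ^ q = u ∧ u ≠ 0 ∧ -3 * ((3 * a + 2) / (3 * a)) ^ 2 = u ^ 2) := by
  have := Fact.mk hp
  set σ := iterateFrobenius F p h
  have hσ (x : F) : x ^ q = σ x := by rw [iterateFrobenius_def, hq]
  have h3 : (3 : F) ≠ 0 := by
    exact_mod_cast (CharP.cast_eq_zero_iff F p 3).not.mpr
      fun hd => (Nat.le_of_dvd three_pos hd).not_gt hp3
  have hq_odd : Odd q := hq ▸ (hp.odd_of_ne_two (by omega)).pow
  have hσ3 : σ (-3) = -3 := by rw [map_neg, map_ofNat]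
  set b := (3 * a + 2) / (3 * a)
  have hb : σ b = -b := σ.map_div_three_mul_eq_neg h3 ha (by
    rw [← hσ]; linear_combination hrel)
  have hb0 : b ≠ 0 := by
    refine div_ne_zero (fun h32 => ha2 ?_) (mul_ne_zero h3 ha)
    field_simp
    linear_combination h32
  refine ⟨?_, ?_, fun hns => ?_⟩
  · rw [hσ, map_mul, map_pow, hσ3, hb, neg_sq]
  · rw [mul_pow, ← pow_mul, Nat.two_mul_div_two_of_even (Nat.Odd.sub_odd hq_odd odd_one)]
  · simp only [hσ] at hns ⊢
    exact σ.exists_fixed_sq_eq_mul_sq hb hb0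
      (FiniteField.isSquare_of_pow_eq_self hq_odd hcard (by rw [hσ, hσ3])) hσ3 hns

/-- Let `p > 3`, `a ∈ F_{q^2}^*` with `a ≠ -2/3` and `3a^{q+1} + a + a^q = 0`.
Then `w := -3((3a+2)/(3a))^2` lies in `F_q`,
`w^{(q-1)/2} = (-3)^{(q-1)/2}((3a+2)/(3a))^{q-1}`, and if `-3` is a non-square
in `F_q`, then `w` is a nonzero square in `F_q`. -/
theorem stmt_16 (p h q : ℕ) (hp : p.Prime) (hp3 : 3 < p) (hh : 1 ≤ h) (hq : q = p ^ h)
    (F : Type*) [Field F] [Fintype F] [CharP F p]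
    (hcard : Fintype.card F = q ^ 2)
    (a : F) (ha : a ≠ 0) (ha2 : a ≠ -2 / 3)
    (hrel : 3 * a ^ (q + 1) + a + a ^ q = 0) :
    (-3 * ((3 * a + 2) / (3 * a)) ^ 2) ^ q = -3 * ((3 * a + 2) / (3 * a)) ^ 2 ∧
      (-3 * ((3 * a + 2) / (3 * a)) ^ 2) ^ ((q - 1) / 2) =
        (-3 : F) ^ ((q - 1) / 2) * ((3 * a + 2) / (3 * a)) ^ (q - 1) ∧
      ((¬∃ u : F, u ^ q = u ∧ u ^ 2 = (-3 : F)) →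
        ∃ u : F, u ^ q = u ∧ u ≠ 0 ∧ -3 * ((3 * a + 2) / (3 * a)) ^ 2 = u ^ 2) :=
  stmt_16_general p h q hp hp3 hq F hcard a ha ha2 hrel
end

section
/- Let a, b ∈ F_{q^2}^*, A, B, C in an algebraic closure with B = −(a^q+bA)/b and C = a^{1-q}. Suppose F_{a,b}(X,Y) = −b(XY+AX+BY+C)(XY+BX+AY+C). Then a^2 b − a^{2q} b^q = 0 and b(a^{q+1} − a^q A − b^{q+1} − bA^2) = 0; consequently b = v/a^2 for some v ∈ F_q^* and v^4 (a^{q+1}+3v)^2 (a^{3q+3} + a^{q+1}v − v^2) = 0. -/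
/-!
Both sides of the factorization are cubics in `X` whose coefficients are cubics in `Y`, so over
the infinite field `AlgebraicClosure F` they agree coefficientwise. The coefficients of `X³Y⁰`, `XY⁰` and `XY²`
give `a^{q+1} - b^{q+1} = -bAB`, `b^q = bC²` and `1 = b(AB - A² - B² - 2C)`. Substituting
`bB = -(a^q + bA)` and `C = a^{1-q}` turns the first two into the stated relations, and the third,
after eliminating `A` with the second stated relation, into a relation between `a` and `b` alone.
With `v = a²b`, the first relation says `v^q = v`, and the last one becomes the stated cubic in `v`.
-/

open Polynomial in
theorem cubic_coeffs_eq_of_forall_eq {R : Type*} [CommRing R] [IsDomain R] [Infinite R]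
    {c₀ c₁ c₂ c₃ d₀ d₁ d₂ d₃ : R}
    (h : ∀ x : R, c₃ * x ^ 3 + c₂ * x ^ 2 + c₁ * x + c₀ = d₃ * x ^ 3 + d₂ * x ^ 2 + d₁ * x + d₀) :
    c₀ = d₀ ∧ c₁ = d₁ ∧ c₂ = d₂ ∧ c₃ = d₃ := by
  have hp : (C c₃ * X ^ 3 + C c₂ * X ^ 2 + C c₁ * X + C c₀ : R[X]) =
      C d₃ * X ^ 3 + C d₂ * X ^ 2 + C d₁ * X + C d₀ :=
    Polynomial.funext fun r => by simpa using h r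
  refine ⟨?_, ?_, ?_, ?_⟩
  · simpa using congrArg (coeff · 0) hp
  · simpa using congrArg (coeff · 1) hp
  · simpa using congrArg (coeff · 2) hp
  · simpa using congrArg (coeff · 3) hp

section Factorization

-- `s` and `t` play the roles of `a^q` and `b^q`.
variable {K : Type*} [CommRing K] [IsDomain K] [Infinite K] {s t a b A B C : K}

theorem coeff_relations_of_factorization
    (h : ∀ X Y : K, (s * X ^ 3 + X ^ 2 + t) * (b * Y ^ 3 + Y + a) -
        (s * Y ^ 3 + Y ^ 2 + t) * (b * X ^ 3 + X + a) =
      (X - Y) * (-b * (X * Y + A * X + B * Y + C) * (X * Y + B * X + A * Y + C))) :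
    a * s - b * t = -(b * A * B) ∧ t = b * C ^ 2 ∧ 1 = b * (A * B - A ^ 2 - B ^ 2 - 2 * C) := by
  have coeff_X_X3 : ∀ y : K,
      -(s * y ^ 3 + y ^ 2 + t) =
          -b * ((B * y + C) * (A * y + C) - y * ((y + A) * (A * y + C) + (y + B) * (B * y + C))) ∧
        s * (b * y ^ 3 + y + a) - b * (s * y ^ 3 + y ^ 2 + t) = -b * ((y + A) * (y + B)) := by
    intro y
    have h := cubic_coeffs_eq_of_forall_eq
      (c₃ := s * (b * y ^ 3 + y + a) - b * (s * y ^ 3 + y ^ 2 + t)) (c₂ := b * y ^ 3 + y + a)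
      (c₁ := -(s * y ^ 3 + y ^ 2 + t)) (c₀ := t * (b * y ^ 3 + y + a) - a * (s * y ^ 3 + y ^ 2 + t))
      (d₃ := -b * ((y + A) * (y + B)))
      (d₂ := -b * ((y + A) * (A * y + C) + (y + B) * (B * y + C) - y * ((y + A) * (y + B))))
      (d₁ := -b * ((B * y + C) * (A * y + C) - y * ((y + A) * (A * y + C) + (y + B) * (B * y + C))))
      (d₀ := b * y * ((B * y + C) * (A * y + C))) fun x => by linear_combination h x y
    exact ⟨h.2.1, h.2.2.2⟩
  obtain ⟨coeff_XY0, -, coeff_XY2, -⟩ := cubic_coeffs_eq_of_forall_eq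
    (c₃ := -s) (c₂ := -1) (c₁ := 0) (c₀ := -t)
    (d₃ := b * (A + B)) (d₂ := -b * (A * B - A ^ 2 - B ^ 2 - 2 * C)) (d₁ := 0) (d₀ := -b * C ^ 2)
    fun y => by linear_combination (coeff_X_X3 y).1
  have coeff_X3Y0 := (coeff_X_X3 0).2
  exact ⟨by linear_combination coeff_X3Y0, by linear_combination -coeff_XY0,
    by linear_combination -coeff_XY2⟩

theorem relations_of_factorization (hB : b * B = -(s + b * A)) (hC : s * C = a)
    (h : ∀ X Y : K, (s * X ^ 3 + X ^ 2 + t) * (b * Y ^ 3 + Y + a) -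
        (s * Y ^ 3 + Y ^ 2 + t) * (b * X ^ 3 + X + a) =
      (X - Y) * (-b * (X * Y + A * X + B * Y + C) * (X * Y + B * X + A * Y + C))) :
    a ^ 2 * b = s ^ 2 * t ∧ a * s - s * A - b * t - b * A ^ 2 = 0 ∧
      s * b + 2 * a * b ^ 2 + s ^ 3 + 3 * a * s ^ 2 * b - 3 * s * b ^ 2 * t = 0 := by
  obtain ⟨hX3Y0, hXY0, hXY2⟩ := coeff_relations_of_factorization h
  have hA : a * s - s * A - b * t - b * A ^ 2 = 0 := by linear_combination hX3Y0 - A * hB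
  refine ⟨by linear_combination (-s ^ 2) * hXY0 - (b * (s * C + a)) * hC, hA, ?_⟩
  linear_combination (b * s) * hXY2 + 3 * s * b * hA - 2 * b ^ 2 * hC -
    (s * (b * B - s - b * A) - s * b * A) * hB

end Factorization

theorem exists_pow_eq_self_of_relations {F : Type*} [Field F] {q : ℕ} {a b : F}
    (ha : a ≠ 0) (hb : b ≠ 0) (hnorm : a ^ 2 * b = (a ^ q) ^ 2 * b ^ q)
    (hrel : a ^ q * b + 2 * a * b ^ 2 + (a ^ q) ^ 3 + 3 * a * (a ^ q) ^ 2 * b -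
      3 * a ^ q * b ^ 2 * b ^ q = 0) :
    ∃ v : F, v ^ q = v ∧ v ≠ 0 ∧ b = v / a ^ 2 ∧
      v ^ 4 * (a ^ (q + 1) + 3 * v) ^ 2 * (a ^ (3 * q + 3) + a ^ (q + 1) * v - v ^ 2) = 0 := by
  refine ⟨a ^ 2 * b, ?_, by positivity, by field_simp, ?_⟩
  · rw [mul_pow, ← pow_mul, mul_comm 2 q, pow_mul]
    exact hnorm.symm
  · have hcubic : (a ^ (q + 1) + 3 * (a ^ 2 * b)) *
        (a ^ (3 * q + 3) + a ^ (q + 1) * (a ^ 2 * b) - (a ^ 2 * b) ^ 2) = 0 := by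
      linear_combination (a ^ 4 * a ^ q) * hrel - 3 * a ^ 4 * b ^ 2 * hnorm
    linear_combination (a ^ 2 * b) ^ 4 * (a ^ (q + 1) + 3 * (a ^ 2 * b)) * hcubic

theorem stmt_18_general (q : ℕ)
    (F : Type*) [Field F]
    (a b : F) (ha : a ≠ 0) (hb : b ≠ 0)
    (A B C : AlgebraicClosure F)
    (i : F →+* AlgebraicClosure F)
    (hB : B = -(i a ^ q + i b * A) / i b)
    (hC : C = i a / i a ^ q)
    (hfact : ∀ X Y : AlgebraicClosure F,
      (i a ^ q * X ^ 3 + X ^ 2 + i b ^ q) * (i b * Y ^ 3 + Y + i a) -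
          (i a ^ q * Y ^ 3 + Y ^ 2 + i b ^ q) * (i b * X ^ 3 + X + i a) =
        (X - Y) * (-(i b) * (X * Y + A * X + B * Y + C) * (X * Y + B * X + A * Y + C))) :
    a ^ 2 * b - a ^ (2 * q) * b ^ q = 0 ∧
      i b * (i a ^ (q + 1) - i a ^ q * A - i b ^ (q + 1) - i b * A ^ 2) = 0 ∧
      ∃ v : F, v ^ q = v ∧ v ≠ 0 ∧ b = v / a ^ 2 ∧
        v ^ 4 * (a ^ (q + 1) + 3 * v) ^ 2 *
          (a ^ (3 * q + 3) + a ^ (q + 1) * v - v ^ 2) = 0 := by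
  have hbB : i b * B = -(i a ^ q + i b * A) := by
    rw [hB]
    field_simp [(map_ne_zero i).2 hb]
  have hsC : i a ^ q * C = i a := by
    rw [hC]
    field_simp [pow_ne_zero q ((map_ne_zero i).2 ha)]
  obtain ⟨hnorm, hA, hrel⟩ := relations_of_factorization hbB hsC hfact
  have hnormF : a ^ 2 * b = (a ^ q) ^ 2 * b ^ q := i.injective (by simpa using hnorm)
  have hrelF : a ^ q * b + 2 * a * b ^ 2 + (a ^ q) ^ 3 + 3 * a * (a ^ q) ^ 2 * b -
      3 * a ^ q * b ^ 2 * b ^ q = 0 := i.injective (by simpa [map_ofNat] using hrel)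
  refine ⟨?_, by linear_combination i b * hA, exists_pow_eq_self_of_relations ha hb hnormF hrelF⟩
  rw [pow_mul']
  linear_combination hnormF

/-- If `F_{a,b}(X,Y)` factors as `-b(XY+AX+BY+C)(XY+BX+AY+C)` with
`B = -(a^q+bA)/b` and `C = a^{1-q}`, then `a^2 b - a^{2q} b^q = 0` and
`b(a^{q+1} - a^q A - b^{q+1} - bA^2) = 0`; consequently `b = v/a^2` for some
`v ∈ F_q^*` with `v^4(a^{q+1}+3v)^2(a^{3q+3} + a^{q+1}v - v^2) = 0`. -/
theorem stmt_18 (p h q : ℕ) (hp : p.Prime) (hh : 1 ≤ h) (hq : q = p ^ h)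
    (F : Type*) [Field F] [Fintype F] [CharP F p]
    (hcard : Fintype.card F = q ^ 2)
    (a b : F) (ha : a ≠ 0) (hb : b ≠ 0)
    (A B C : AlgebraicClosure F)
    (i : F →+* AlgebraicClosure F) (hi : i = algebraMap F (AlgebraicClosure F))
    (hB : B = -(i a ^ q + i b * A) / i b)
    (hC : C = i a / i a ^ q)
    (hfact : ∀ X Y : AlgebraicClosure F,
      (i a ^ q * X ^ 3 + X ^ 2 + i b ^ q) * (i b * Y ^ 3 + Y + i a) -
          (i a ^ q * Y ^ 3 + Y ^ 2 + i b ^ q) * (i b * X ^ 3 + X + i a) =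
        (X - Y) * (-(i b) * (X * Y + A * X + B * Y + C) * (X * Y + B * X + A * Y + C))) :
    a ^ 2 * b - a ^ (2 * q) * b ^ q = 0 ∧
      i b * (i a ^ (q + 1) - i a ^ q * A - i b ^ (q + 1) - i b * A ^ 2) = 0 ∧
      ∃ v : F, v ^ q = v ∧ v ≠ 0 ∧ b = v / a ^ 2 ∧
        v ^ 4 * (a ^ (q + 1) + 3 * v) ^ 2 *
          (a ^ (3 * q + 3) + a ^ (q + 1) * v - v ^ 2) = 0 :=
  stmt_18_general q F a b ha hb A B C i hB hC hfact
end
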